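/- In the graph H(n,k,m) on vertex set {1,...,n} (edges: all pairs within A = {1,...,m}, and all pairs between C = {1,...,k−m} and B = {m+1,...,n}), the number of copies of K*_{s,t} equals C(k−m, s)·C(n−s, t) + (n−m)·C(k−m, s−1)·C(k−m−s+1, t) + (C(m, s) − C(k−m, s))·C(m−s, t), where ⌈(k+1)/2⌉ ≤ m ≤ k. -/

import Mathlib

open SimpleGraph Finset

/-- `G` contains a linear forest with `k` edges: a subgraph that is acyclic
with maximum degree at most 2 and exactly `k` edges. -/
def containsLinearForest {V : Type*} (G : SimpleGraph V) (k : ℕ) : Prop :=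
  ∃ H : SimpleGraph V, H ≤ G ∧ H.IsAcyclic ∧ (∀ v, (H.neighborSet v).ncard ≤ 2) ∧
    H.edgeSet.ncard = k

/-- `G` contains a matching with `k` edges. -/
def containsMatching {V : Type*} (G : SimpleGraph V) (k : ℕ) : Prop :=
  ∃ H : SimpleGraph V, H ≤ G ∧ (∀ v, (H.neighborSet v).ncard ≤ 1) ∧ H.edgeSet.ncard = k

/-- Number of `s`-cliques (copies of `K_s`) in `G`. -/
noncomputable def cliqueCount {V : Type*} (G : SimpleGraph V) (s : ℕ) : ℕ :=
  {S : Finset V | G.IsNClique s S}.ncard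

/-- Number of copies of `K*_{s,t}` in `G`: pairs `(W₁, W₂)` of disjoint vertex sets with
`|W₁| = s`, `|W₂| = t`, `W₁` a clique and all `W₁`–`W₂` edges present. -/
noncomputable def kstCount {V : Type*} (G : SimpleGraph V) (s t : ℕ) : ℕ :=
  {p : Finset V × Finset V | p.1.card = s ∧ p.2.card = t ∧ Disjoint p.1 p.2 ∧
    G.IsClique (p.1 : Set V) ∧ ∀ a ∈ p.1, ∀ b ∈ p.2, G.Adj a b}.ncard

/-- The graph `H(n,k,m)` on vertex set `Fin n`: all pairs within `A = {0,…,m-1}` together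
with all pairs between `C = {0,…,k-m-1}` and `B = {m,…,n-1}`. -/
def Hgraph (n k m : ℕ) : SimpleGraph (Fin n) where
  Adj a b := a ≠ b ∧ (((a : ℕ) < m ∧ (b : ℕ) < m) ∨
    ((a : ℕ) < k - m ∧ m ≤ (b : ℕ)) ∨ ((b : ℕ) < k - m ∧ m ≤ (a : ℕ)))
  symm := ⟨by rintro a b ⟨h1, h2⟩; exact ⟨h1.symm, by tauto⟩⟩
  loopless := ⟨by rintro a ⟨h1, -⟩; exact h1 rfl⟩

/-!
In `H(n,k,m)` write `A = {v < m}`, `C = {v < k - m}` and `B = Aᶜ`. Since `k - m ≤ m` we have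
`C ⊆ A`, so every vertex of `C` is adjacent to all other vertices, `A` is a clique, and a vertex
of `B` is adjacent exactly to `C`. A copy of `K*_{s,t}` is an `s`-clique `W₁` together with a
`t`-subset of its common neighbourhood, and the `s`-cliques come in three kinds:
`W₁ ⊆ C`, with common neighbourhood `W₁ᶜ`; `W₁ ⊆ A`, `W₁ ⊄ C`, with common neighbourhood `A \ W₁`;
and `W₁ = insert b W'` with `b ∈ B`, `W' ⊆ C`, with common neighbourhood `C \ W'`.
Summing `C(|N(W₁)|, t)` over each kind gives the three terms of the formula.
-/

theorem Nat.choose_sub_pred_eq {s t : ℕ} (hs : 1 ≤ s) (ht : 2 ≤ t) (c : ℕ) :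
    (c - (s - 1)).choose t = (c - s + 1).choose t := by
  rcases le_or_gt s c with hsc | hcs
  · rw [show c - (s - 1) = c - s + 1 by omega]
  · rw [Nat.choose_eq_zero_of_lt (by omega), Nat.choose_eq_zero_of_lt (by omega)]

theorem Finset.filter_powersetCard_subset_eq {α : Type*} [DecidableEq α] {A C : Finset α}
    (hCA : C ⊆ A) (s : ℕ) : {W ∈ A.powersetCard s | W ⊆ C} = C.powersetCard s := by
  ext W
  simp only [mem_filter, mem_powersetCard]
  exact ⟨fun ⟨⟨_, h⟩, hW⟩ => ⟨hW, h⟩, fun ⟨hW, h⟩ => ⟨⟨hW.trans hCA, h⟩, hW⟩⟩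

namespace SimpleGraph

section CommonNeighbors

variable {V : Type*} [Fintype V] (G : SimpleGraph V) [DecidableRel G.Adj]

def commonNeighborFinset (W : Finset V) : Finset V := {v | ∀ a ∈ W, G.Adj a v}

variable {G} in
@[simp]
theorem mem_commonNeighborFinset {W : Finset V} {v : V} :
    v ∈ G.commonNeighborFinset W ↔ ∀ a ∈ W, G.Adj a v := by
  simp [commonNeighborFinset]

theorem kstCount_eq_sum_cliqueFinset [DecidableEq V] (s t : ℕ) :
    kstCount G s t = ∑ W ∈ G.cliqueFinset s, (#(G.commonNeighborFinset W)).choose t := by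
  simp_rw [← card_powersetCard, ← card_sigma]
  rw [kstCount, ← card_map (Equiv.sigmaEquivProd _ _).toEmbedding, ← Set.ncard_coe_finset]
  congr 1
  ext ⟨W₁, W₂⟩
  simp only [Set.mem_ofPred_eq, coe_map, Set.mem_image, mem_coe, mem_sigma,
    mem_cliqueFinset_iff, mem_powersetCard, Equiv.coe_toEmbedding]
  constructor
  · rintro ⟨h₁, h₂, -, hW, hadj⟩
    refine ⟨⟨W₁, W₂⟩, ⟨⟨hW, h₁⟩, fun v hv => ?_, h₂⟩, rfl⟩
    exact mem_commonNeighborFinset.2 fun a ha => hadj a ha v hv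
  · rintro ⟨⟨W, W'⟩, ⟨⟨hW, h₁⟩, hsub, h₂⟩, he⟩
    simp only [Equiv.sigmaEquivProd_apply, Prod.mk.injEq] at he
    obtain ⟨rfl, rfl⟩ := he
    have hadj : ∀ a ∈ W, ∀ b ∈ W', G.Adj a b :=
      fun a ha b hb => mem_commonNeighborFinset.1 (hsub hb) a ha
    -- disjointness is automatic: `G` is loopless
    have hdisj : Disjoint W W' :=
      Finset.disjoint_left.2 fun a ha ha' => G.loopless.irrefl a (hadj a ha a ha')
    exact ⟨h₁, h₂, hdisj, hW, hadj⟩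

end CommonNeighbors

variable {V : Type*}

def cliqueJoinCompl (A C : Finset V) : SimpleGraph V where
  Adj a b := a ≠ b ∧ ((a ∈ A ∧ b ∈ A) ∨ (a ∈ C ∧ b ∉ A) ∨ (b ∈ C ∧ a ∉ A))
  symm := ⟨by rintro a b ⟨hab, h⟩; exact ⟨hab.symm, by tauto⟩⟩
  loopless := ⟨fun _ h => h.1 rfl⟩

instance [DecidableEq V] (A C : Finset V) : DecidableRel (cliqueJoinCompl A C).Adj :=
  fun _ _ => inferInstanceAs (Decidable (_ ∧ _))

namespace cliqueJoinCompl

variable {A C : Finset V}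

theorem adj_of_mem (hCA : C ⊆ A) {a b : V} (ha : a ∈ C) (hab : a ≠ b) :
    (cliqueJoinCompl A C).Adj a b := by
  by_cases hb : b ∈ A
  · exact ⟨hab, Or.inl ⟨hCA ha, hb⟩⟩
  · exact ⟨hab, Or.inr (Or.inl ⟨ha, hb⟩)⟩

theorem mem_of_adj_of_notMem (hCA : C ⊆ A) {a b : V} (ha : a ∉ A)
    (h : (cliqueJoinCompl A C).Adj a b) : b ∈ C := by
  have := mt (@hCA a) ha
  obtain ⟨-, h⟩ := h
  tauto

theorem mem_of_adj_of_mem_of_notMem {a b : V} (haA : a ∈ A) (haC : a ∉ C)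
    (h : (cliqueJoinCompl A C).Adj a b) : b ∈ A := by
  obtain ⟨-, h⟩ := h
  tauto

theorem isClique_of_subset {W : Finset V} (hW : W ⊆ A) :
    (cliqueJoinCompl A C).IsClique (W : Set V) :=
  fun _ ha _ hb hab => ⟨hab, Or.inl ⟨hW ha, hW hb⟩⟩

variable [Fintype V] [DecidableEq V]

theorem commonNeighborFinset_of_subset (hCA : C ⊆ A) {W : Finset V} (hW : W ⊆ C) :
    (cliqueJoinCompl A C).commonNeighborFinset W = univ \ W := by
  ext v
  simp only [mem_commonNeighborFinset, mem_sdiff, mem_univ, true_and]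
  exact ⟨fun h hv => (h v hv).ne rfl,
    fun hv a ha => adj_of_mem hCA (hW ha) (ne_of_mem_of_not_mem ha hv)⟩

theorem commonNeighborFinset_of_not_subset {W : Finset V} (hWA : W ⊆ A) (hWC : ¬W ⊆ C) :
    (cliqueJoinCompl A C).commonNeighborFinset W = A \ W := by
  obtain ⟨a₀, ha₀, ha₀C⟩ := not_subset.1 hWC
  ext v
  simp only [mem_commonNeighborFinset, mem_sdiff]
  refine ⟨fun h => ⟨mem_of_adj_of_mem_of_notMem (hWA ha₀) ha₀C (h a₀ ha₀),
    fun hv => (h v hv).ne rfl⟩, fun ⟨hvA, hvW⟩ a ha => ?_⟩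
  exact ⟨ne_of_mem_of_not_mem ha hvW, Or.inl ⟨hWA ha, hvA⟩⟩

theorem commonNeighborFinset_insert (hCA : C ⊆ A) {b : V} {W : Finset V} (hb : b ∉ A)
    (hW : W ⊆ C) : (cliqueJoinCompl A C).commonNeighborFinset (insert b W) = C \ W := by
  ext v
  simp only [mem_commonNeighborFinset, forall_mem_insert, mem_sdiff]
  refine ⟨fun ⟨hbv, h⟩ => ⟨mem_of_adj_of_notMem hCA hb hbv, fun hv => (h v hv).ne rfl⟩,
    fun ⟨hvC, hvW⟩ => ⟨?_, fun a ha => adj_of_mem hCA (hW ha) (ne_of_mem_of_not_mem ha hvW)⟩⟩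
  exact (adj_of_mem hCA hvC (ne_of_mem_of_not_mem (hCA hvC) hb)).symm

theorem cliqueFinset_filter_subset (s : ℕ) :
    {W ∈ (cliqueJoinCompl A C).cliqueFinset s | W ⊆ A} = A.powersetCard s := by
  ext W
  simp only [mem_filter, mem_cliqueFinset_iff, mem_powersetCard, isNClique_iff]
  exact ⟨fun ⟨⟨_, h⟩, hW⟩ => ⟨hW, h⟩, fun ⟨hW, h⟩ => ⟨⟨isClique_of_subset hW, h⟩, hW⟩⟩

theorem cliqueFinset_filter_not_subset (hCA : C ⊆ A) {s : ℕ} (hs : 1 ≤ s) :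
    {W ∈ (cliqueJoinCompl A C).cliqueFinset s | ¬W ⊆ A} =
      (Aᶜ ×ˢ C.powersetCard (s - 1)).image fun p => insert p.1 p.2 := by
  ext W
  simp only [mem_filter, mem_cliqueFinset_iff, mem_image, mem_product, mem_compl,
    mem_powersetCard, Prod.exists]
  constructor
  · rintro ⟨⟨hW, hcard⟩, hWA⟩
    obtain ⟨b, hbW, hbA⟩ := not_subset.1 hWA
    refine ⟨b, W.erase b, ⟨hbA, fun a ha => ?_, by rw [card_erase_of_mem hbW, hcard]⟩,
      insert_erase hbW⟩
    exact mem_of_adj_of_notMem hCA hbA (hW hbW (mem_of_mem_erase ha) (ne_of_mem_erase ha).symm)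
  · rintro ⟨b, W, ⟨hbA, hWC, hcard⟩, rfl⟩
    have hbW : b ∉ W := fun h => hbA (hCA (hWC h))
    refine ⟨⟨?_, by rw [card_insert_of_notMem hbW, hcard]; omega⟩,
      fun h => hbA (h (mem_insert_self b W))⟩
    rw [coe_insert, isClique_insert]
    exact ⟨isClique_of_subset (hWC.trans hCA),
      fun a ha hba => (adj_of_mem hCA (hWC ha) hba.symm).symm⟩

theorem injOn_insert (hCA : C ⊆ A) (s : ℕ) :
    Set.InjOn (fun p : V × Finset V => insert p.1 p.2) ↑(Aᶜ ×ˢ C.powersetCard s) := by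
  rintro ⟨b, W⟩ h ⟨b', W'⟩ h' he
  simp only [coe_product, Set.mem_prod, mem_coe, mem_compl, mem_powersetCard] at h h' he
  have hbb' : b = b' := by
    rcases mem_insert.1 (he ▸ mem_insert_self b W) with hb | hb
    · exact hb
    · exact absurd (hCA (h'.2.1 hb)) h.1
  subst hbb'
  have hbW : b ∉ W := fun hb => h.1 (hCA (h.2.1 hb))
  have hbW' : b ∉ W' := fun hb => h.1 (hCA (h'.2.1 hb))
  rw [← erase_insert hbW, ← erase_insert hbW', he]

end cliqueJoinCompl

open cliqueJoinCompl in
theorem kstCount_cliqueJoinCompl [Fintype V] [DecidableEq V] {A C : Finset V} (hCA : C ⊆ A)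
    {s : ℕ} (hs : 1 ≤ s) (t : ℕ) :
    kstCount (cliqueJoinCompl A C) s t =
      (#C).choose s * (Fintype.card V - s).choose t +
      #Aᶜ * (#C).choose (s - 1) * (#C - (s - 1)).choose t +
      ((#A).choose s - (#C).choose s) * (#A - s).choose t := by
  set G := cliqueJoinCompl A C
  have hC : ∑ W ∈ C.powersetCard s, (#(G.commonNeighborFinset W)).choose t =
      (#C).choose s * (Fintype.card V - s).choose t := by
    rw [sum_const_nat fun W hW => ?_, card_powersetCard]
    obtain ⟨hWC, hW⟩ := mem_powersetCard.1 hW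
    rw [commonNeighborFinset_of_subset hCA hWC, card_sdiff_of_subset (subset_univ W), card_univ,
      hW]
  have hA : ∑ W ∈ {W ∈ A.powersetCard s | ¬W ⊆ C}, (#(G.commonNeighborFinset W)).choose t =
      ((#A).choose s - (#C).choose s) * (#A - s).choose t := by
    rw [sum_const_nat fun W hW => ?_, filter_not, filter_powersetCard_subset_eq hCA,
      card_sdiff_of_subset (powersetCard_mono hCA), card_powersetCard, card_powersetCard]
    obtain ⟨hWA, hWC⟩ := mem_filter.1 hW
    obtain ⟨hWA, hW⟩ := mem_powersetCard.1 hWA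
    rw [commonNeighborFinset_of_not_subset hWA hWC, card_sdiff_of_subset hWA, hW]
  have hB : ∑ p ∈ Aᶜ ×ˢ C.powersetCard (s - 1),
      (#(G.commonNeighborFinset (insert p.1 p.2))).choose t =
      #Aᶜ * (#C).choose (s - 1) * (#C - (s - 1)).choose t := by
    rw [sum_const_nat fun p hp => ?_, card_product, card_powersetCard]
    obtain ⟨hbA, hpC⟩ := mem_product.1 hp
    obtain ⟨hpC, hp⟩ := mem_powersetCard.1 hpC
    rw [commonNeighborFinset_insert hCA (mem_compl.1 hbA) hpC, card_sdiff_of_subset hpC, hp]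
  rw [kstCount_eq_sum_cliqueFinset, ← sum_filter_add_sum_filter_not _ (· ⊆ A),
    cliqueFinset_filter_subset, cliqueFinset_filter_not_subset hCA hs,
    sum_image (injOn_insert hCA _), ← sum_filter_add_sum_filter_not _ (· ⊆ C),
    filter_powersetCard_subset_eq hCA, hC, hA, hB]
  ring

end SimpleGraph

theorem Hgraph_eq_cliqueJoinCompl (n k m : ℕ) :
    Hgraph n k m =
      cliqueJoinCompl ({v | (v : ℕ) < m} : Finset (Fin n)) {v | (v : ℕ) < k - m} := by
  ext a b
  simp [Hgraph, cliqueJoinCompl]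

/-- The number of copies of `K*_{s,t}` in `H(n,k,m)` for `⌈(k+1)/2⌉ ≤ m ≤ k`
(with `s ≥ 1`, `t ≥ 2`, `n ≥ k+1`). -/
theorem stmt11 (n k m s t : ℕ) (hs : 1 ≤ s) (ht : 2 ≤ t)
    (hm1 : (k + 2) / 2 ≤ m) (hm2 : m ≤ k) (hn : k + 1 ≤ n) :
    kstCount (Hgraph n k m) s t =
      Nat.choose (k - m) s * Nat.choose (n - s) t +
      (n - m) * Nat.choose (k - m) (s - 1) * Nat.choose (k - m - s + 1) t +
      (Nat.choose m s - Nat.choose (k - m) s) * Nat.choose (m - s) t := by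
  have hCA : ({v | (v : ℕ) < k - m} : Finset (Fin n)) ⊆
      ({v | (v : ℕ) < m} : Finset (Fin n)) := by
    intro v hv
    simp only [mem_filter, mem_univ, true_and] at hv ⊢
    omega
  rw [Hgraph_eq_cliqueJoinCompl, kstCount_cliqueJoinCompl hCA hs, card_compl,
    Fin.card_filter_val_lt, Fin.card_filter_val_lt, Fintype.card_fin,
    Nat.choose_sub_pred_eq hs ht, min_eq_right (by omega : m ≤ n),
    min_eq_right (by omega : k - m ≤ n)]
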